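/- Let A[1..n] be an array with no consecutive equal elements, and for each i in {1,...,n-1} let k_i be the number of 1s strictly between positions f(i,T) and f(i+1,T) in BP(T), where T ∈ {Min(A), Max(A)} is the tree that is NOT the relevant tree of node i. Then k_i ≥ 1 for all i, and the total length of the concatenation S = s_1 s_2 ... s_{n-1}, where s_i = 1^{k_i - 1} 0, is at most 2(n-1); in particular S contains exactly n-1 zeros and at most n-1 ones. -/

import Mathlib

def psv (A : ℕ → ℤ) (i : ℕ) : ℕ := Nat.findGreatest (fun j => A j < A i) (i - 1)

def plv (A : ℕ → ℤ) (i : ℕ) : ℕ := Nat.findGreatest (fun j => A i < A j) (i - 1)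

def internalMin (A : ℕ → ℤ) (n i : ℕ) : Prop := ∃ j, 1 ≤ j ∧ j ≤ n ∧ psv A j = i

def internalMax (A : ℕ → ℤ) (n i : ℕ) : Prop := ∃ j, 1 ≤ j ∧ j ≤ n ∧ plv A j = i

def leafMin (A : ℕ → ℤ) (n i : ℕ) : Prop := ¬ internalMin A n i

def leafMax (A : ℕ → ℤ) (n i : ℕ) : Prop := ¬ internalMax A n i

def NoConsecEq (A : ℕ → ℤ) (n : ℕ) : Prop := ∀ i, 1 ≤ i → i < n → A i ≠ A (i + 1)

def isLeftmostChildMin (A : ℕ → ℤ) (n c : ℕ) : Prop :=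
  1 ≤ c ∧ c ≤ n ∧ ∀ j, 1 ≤ j → j ≤ n → psv A j = psv A c → c ≤ j

def isLeftmostChildMax (A : ℕ → ℤ) (n c : ℕ) : Prop :=
  1 ≤ c ∧ c ≤ n ∧ ∀ j, 1 ≤ j → j ≤ n → plv A j = plv A c → c ≤ j

def immLeftSibMin (A : ℕ → ℤ) (n j i : ℕ) : Prop :=
  1 ≤ j ∧ j < i ∧ i ≤ n ∧ psv A j = psv A i ∧ ∀ k, j < k → k < i → psv A k ≠ psv A i

def immLeftSibMax (A : ℕ → ℤ) (n j i : ℕ) : Prop :=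
  1 ≤ j ∧ j < i ∧ i ≤ n ∧ plv A j = plv A i ∧ ∀ k, j < k → k < i → plv A k ≠ plv A i

def redMin (A : ℕ → ℤ) (n i : ℕ) : Prop := ∃ j, immLeftSibMin A n j i ∧ A j ≠ A i

def redMax (A : ℕ → ℤ) (n i : ℕ) : Prop := ∃ j, immLeftSibMax A n j i ∧ A j ≠ A i

def validMin (A : ℕ → ℤ) (n i : ℕ) : Prop :=
  1 ≤ i ∧ i ≤ n ∧ ¬ isLeftmostChildMin A n i ∧ ¬ ∃ j, immLeftSibMin A n j i ∧ leafMin A n j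

def validMax (A : ℕ → ℤ) (n i : ℕ) : Prop :=
  1 ≤ i ∧ i ≤ n ∧ ¬ isLeftmostChildMax A n i ∧ ¬ ∃ j, immLeftSibMax A n j i ∧ leafMax A n j

inductive LTree where
  | node : ℕ → List LTree → LTree

mutual
def bpt : LTree → List (Bool × ℕ)
  | .node l cs => (false, l) :: bptL cs ++ [(true, l)]
def bptL : List LTree → List (Bool × ℕ)
  | [] => []
  | t :: ts => bpt t ++ bptL ts
end

def bpSeq (t : LTree) : List Bool := (bpt t).map Prod.fst

def fpos (t : LTree) (i : ℕ) : ℕ := (bpt t).idxOf (false, i) + 1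

def childList (P : ℕ → ℕ) (n i : ℕ) : List ℕ :=
  (List.range (n + 1)).filter (fun j => decide (1 ≤ j ∧ P j = i ∧ i < j))

def buildTree (P : ℕ → ℕ) (n : ℕ) : ℕ → ℕ → LTree
  | 0, i => .node i []
  | fuel + 1, i => .node i ((childList P n i).map (buildTree P n fuel))

def minTree (A : ℕ → ℤ) (n : ℕ) : LTree := buildTree (psv A) n (n + 1) 0

def maxTree (A : ℕ → ℤ) (n : ℕ) : LTree := buildTree (plv A) n (n + 1) 0

/-- number of `1`s (true bits) strictly between 1-indexed positions `a` and `b` of `B`. -/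
def onesBetween (B : List Bool) (a b : ℕ) : ℕ :=
  ((List.range B.length).filter (fun p => decide (a < p + 1 ∧ p + 1 < b) && B.getD p false)).length

open scoped Classical in
/-- `kval A n i` is the number of `1`s strictly between `f(i,T)` and `f(i+1,T)` in `BP(T)`,
where `T` is the tree (among `Min(A)`, `Max(A)`) that is NOT the relevant tree of node `i`. -/
noncomputable def kval (A : ℕ → ℤ) (n i : ℕ) : ℕ :=
  if internalMin A n i then
    onesBetween (bpSeq (maxTree A n)) (fpos (maxTree A n) i) (fpos (maxTree A n) (i + 1))
  else
    onesBetween (bpSeq (minTree A n)) (fpos (minTree A n) i) (fpos (minTree A n) (i + 1))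


/-!
Both trees come from a parent function whose arcs `(P j, j)` do not cross (PSV for `Min(A)`, and
PLV, which is the PSV of `-A`, for `Max(A)`); for such a parent function the preorder numbering is
`0, 1, …, n`, so `f(1, T) < f(2, T) < ⋯ < f(n, T)`.

A node `i ≥ 1` cannot be internal in both trees: a child in `Min(A)` forces `A i < A (i + 1)`,
one in `Max(A)` forces `A (i + 1) < A i`. So `i` is a leaf of the tree `T` used for `k_i`, its
closing `1` directly follows `f(i, T)`, and `k_i ≥ 1`.

In a fixed tree the `1`s counted for `i = 1, …, n - 1` lie in disjoint intervals before `f(n, T)`.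
That prefix contains the `n` opening parentheses of `0, …, n - 1` and, since the root is still
open, strictly fewer closing ones. Each tree thus contributes at most `n - 1`, and
`Σ k_i ≤ 2(n - 1)`.
-/

lemma length_filter_range_getD (B : List Bool) (a m : ℕ) :
    ((List.range B.length).filter (fun p => decide (a ≤ p ∧ p < m) && B.getD p false)).length =
      ((B.take m).drop a).count true := by
  induction B generalizing a m with
  | nil => simp
  | cons x B ih =>
    rw [List.length_cons, List.range_succ_eq_map, List.filter_cons, List.filter_map]
    rcases m with _ | m
    · simp
    rcases a with _ | a
    · have := ih 0 m
      simp only [Function.comp_def, List.getD_cons_succ] at this ⊢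
      cases x <;> simpa using this
    · simpa [Function.comp_def] using ih a m

lemma onesBetween_eq_count (B : List Bool) (a b : ℕ) :
    onesBetween B a b = ((B.take (b - 1)).drop a).count true := by
  rw [onesBetween, ← length_filter_range_getD]
  congr 2
  funext p
  congr 1
  simp only [decide_eq_decide]
  omega

lemma count_drop_take {α : Type*} [BEq α] (l : List α) (x : α) {a m : ℕ} (h : a ≤ m) :
    ((l.take m).drop a).count x = (l.take m).count x - (l.take a).count x := by
  conv_rhs => rw [← List.take_append_drop a (l.take m), List.take_take, min_eq_left h]
  rw [List.count_append]
  omega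

@[simp] lemma bpt_node (l : ℕ) (cs : List LTree) :
    bpt (.node l cs) = (false, l) :: bptL cs ++ [(true, l)] := by
  rw [bpt]

@[simp] lemma bptL_nil : bptL [] = [] := by rw [bptL]

lemma bptL_cons (t : LTree) (ts : List LTree) : bptL (t :: ts) = bpt t ++ bptL ts := by
  rw [bptL]

lemma bptL_eq_flatten (ts : List LTree) : bptL ts = (ts.map bpt).flatten := by
  induction ts with
  | nil => rfl
  | cons t ts ih => rw [bptL_cons, ih]; rfl

mutual
theorem countP_take_bpt_le (t : LTree) (k : ℕ) :
    ((bpt t).take k).countP (·.1) ≤ ((bpt t).take k).countP (!·.1) :=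
  match t, k with
  | .node _ _, 0 => by simp
  | .node l cs, k + 1 => by
    have hcs := countP_take_bptL_le cs k
    have hlast : ([(true, l)].take (k - (bptL cs).length)).countP (·.1) ≤ 1 :=
      List.countP_le_length.trans (by simp)
    rw [bpt_node, List.cons_append, List.take_succ_cons, List.countP_cons, List.countP_cons,
      List.take_append, List.countP_append, List.countP_append]
    simp only [Bool.not_false, Bool.false_eq_true, if_true, if_false]
    omega

theorem countP_take_bptL_le (ts : List LTree) (k : ℕ) :
    ((bptL ts).take k).countP (·.1) ≤ ((bptL ts).take k).countP (!·.1) :=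
  match ts with
  | [] => by simp
  | t :: ts => by
    rw [bptL_cons, List.take_append, List.countP_append, List.countP_append]
    exact Nat.add_le_add (countP_take_bpt_le t k) (countP_take_bptL_le ts _)
end

lemma countP_take_bpt_lt (t : LTree) {k : ℕ} (hk0 : 0 < k) (hk : k < (bpt t).length) :
    ((bpt t).take k).countP (·.1) < ((bpt t).take k).countP (!·.1) := by
  obtain ⟨l, cs⟩ := t
  obtain ⟨k, rfl⟩ := Nat.exists_eq_add_of_lt hk0
  simp only [bpt_node, List.length_append, List.length_cons, List.length_nil] at hk
  have hcs := countP_take_bptL_le cs k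
  rw [bpt_node, zero_add, List.cons_append, List.take_succ_cons, List.countP_cons,
    List.countP_cons, List.take_append_of_le_length (by omega)]
  simp only [Bool.not_false, Bool.false_eq_true, if_true, if_false]
  omega

lemma count_true_take_bpSeq (T : LTree) (k : ℕ) :
    ((bpSeq T).take k).count true = ((bpt T).take k).countP (·.1) := by
  simp [bpSeq, ← List.map_take, List.count, List.countP_map, Function.comp_def]

/-- The labels of the opening parentheses, i.e. the nodes in preorder. -/
def openLabels (M : List (Bool × ℕ)) : List ℕ :=
  M.filterMap fun x => if x.1 then none else some x.2

@[simp] lemma openLabels_nil : openLabels [] = [] := rfl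

@[simp] lemma openLabels_cons_true (l : ℕ) (M : List (Bool × ℕ)) :
    openLabels ((true, l) :: M) = openLabels M := rfl

@[simp] lemma openLabels_cons_false (l : ℕ) (M : List (Bool × ℕ)) :
    openLabels ((false, l) :: M) = l :: openLabels M := rfl

@[simp] lemma openLabels_append (M N : List (Bool × ℕ)) :
    openLabels (M ++ N) = openLabels M ++ openLabels N :=
  List.filterMap_append

lemma mem_openLabels {l : ℕ} {M : List (Bool × ℕ)} : l ∈ openLabels M ↔ (false, l) ∈ M := by
  simp [openLabels]

lemma length_openLabels (M : List (Bool × ℕ)) : (openLabels M).length = M.countP (!·.1) := by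
  induction M with
  | nil => rfl
  | cons x M ih =>
    obtain ⟨_ | _, l⟩ := x <;> simp [ih]

lemma eq_range_of_append_cons_eq_range {s t : List ℕ} {i m : ℕ} (h : s ++ i :: t = List.range m) :
    s = List.range i := by
  have hlen := congrArg List.length h
  simp only [List.length_append, List.length_cons, List.length_range] at hlen
  have hi : i = s.length := by
    simpa using List.getElem_of_eq h (i := s.length) (by simp)
  rw [hi, ← min_eq_left (show s.length ≤ m by omega), ← List.take_range, ← h, List.take_left]

section Positions

variable {L : List (Bool × ℕ)} {n : ℕ}

lemma idxOf_append_cons {s t : List (Bool × ℕ)} {i : ℕ} (hs : openLabels s = List.range i) :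
    (s ++ (false, i) :: t).idxOf (false, i) = s.length := by
  have : (false, i) ∉ s := by simp [← mem_openLabels, hs]
  simp [List.idxOf_append_of_notMem this]

lemma mem_of_openLabels_eq_range (hL : openLabels L = List.range (n + 1)) {i : ℕ} (hi : i ≤ n) :
    (false, i) ∈ L :=
  mem_openLabels.1 (by rw [hL, List.mem_range]; omega)

lemma exists_eq_append_cons (hL : openLabels L = List.range (n + 1)) {i : ℕ} (hi : i ≤ n) :
    ∃ s t, L = s ++ (false, i) :: t ∧ openLabels s = List.range i := by
  obtain ⟨s, t, rfl⟩ := List.append_of_mem (mem_of_openLabels_eq_range hL hi)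
  exact ⟨s, t, rfl, eq_range_of_append_cons_eq_range (t := openLabels t) (by simpa using hL)⟩

lemma countP_take_idxOf (hL : openLabels L = List.range (n + 1)) {i : ℕ} (hi : i ≤ n) :
    (L.take (L.idxOf (false, i))).countP (!·.1) = i := by
  obtain ⟨s, t, rfl, hs⟩ := exists_eq_append_cons hL hi
  rw [idxOf_append_cons hs, List.take_left, ← length_openLabels, hs, List.length_range]

lemma idxOf_lt_idxOf (hL : openLabels L = List.range (n + 1)) {i j : ℕ} (hij : i < j)
    (hj : j ≤ n) : L.idxOf (false, i) < L.idxOf (false, j) := by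
  by_contra! h
  have := (List.take_sublist_take_left (l := L) h).countP_le (p := (!·.1))
  rw [countP_take_idxOf hL hj, countP_take_idxOf hL (hij.le.trans hj)] at this
  omega

lemma monotone_idxOf (hL : openLabels L = List.range (n + 1)) :
    Monotone fun i => L.idxOf (false, i) := by
  intro i j hij
  rcases le_or_gt j n with hj | hj
  · rcases hij.eq_or_lt with rfl | hij
    · rfl
    · exact (idxOf_lt_idxOf hL hij hj).le
  · have : (false, j) ∉ L := by rw [← mem_openLabels, hL, List.mem_range]; omega
    simp only [List.idxOf_eq_length_iff.2 this]
    exact List.idxOf_le_length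

lemma getElem?_idxOf_add_one (hL : openLabels L = List.range (n + 1)) {i : ℕ}
    (h : [(false, i), (true, i)] <:+: L) : L[L.idxOf (false, i) + 1]? = some (true, i) := by
  obtain ⟨s, t, rfl⟩ := h
  have hs : openLabels s = List.range i :=
    eq_range_of_append_cons_eq_range (t := openLabels ((true, i) :: t)) (by simpa using hL)
  simp only [List.append_assoc, List.cons_append, List.nil_append, idxOf_append_cons hs]
  simp

end Positions

def bpGap (T : LTree) (i : ℕ) : ℕ := onesBetween (bpSeq T) (fpos T i) (fpos T (i + 1))

lemma bpGap_eq_count (T : LTree) (i : ℕ) :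
    bpGap T i = (((bpSeq T).take ((bpt T).idxOf (false, i + 1))).drop
      ((bpt T).idxOf (false, i) + 1)).count true := by
  rw [bpGap, onesBetween_eq_count, fpos, fpos, Nat.add_sub_cancel]

section Gaps

variable {T : LTree} {n : ℕ} (hL : openLabels (bpt T) = List.range (n + 1))
include hL

lemma one_le_bpGap {i : ℕ} (hi : i + 1 ≤ n) (hleaf : [(false, i), (true, i)] <:+: bpt T) :
    1 ≤ bpGap T i := by
  have hclose := getElem?_idxOf_add_one hL hleaf
  have hlt : (bpt T).idxOf (false, i) + 1 < (bpt T).idxOf (false, i + 1) := by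
    have hne : (bpt T).idxOf (false, i + 1) ≠ (bpt T).idxOf (false, i) + 1 := fun h => by
      have := List.getElem?_idxOf (mem_of_openLabels_eq_range hL hi)
      rw [h, hclose] at this
      simp at this
    have := idxOf_lt_idxOf hL (Nat.lt_add_one i) hi
    omega
  rw [bpGap_eq_count, Nat.one_le_iff_ne_zero, Ne, List.count_eq_zero, not_not,
    List.mem_iff_getElem?]
  exact ⟨0, by simp [hlt, bpSeq, hclose]⟩

lemma sum_bpGap_le : ∑ i ∈ Finset.Icc 1 (n - 1), bpGap T i ≤ n - 1 := by
  rcases n.eq_zero_or_pos with rfl | hn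
  · simp
  have hroot := countP_take_bpt_lt T (idxOf_lt_idxOf hL hn le_rfl).pos
    (List.idxOf_lt_length_of_mem (mem_of_openLabels_eq_range hL le_rfl))
  rw [countP_take_idxOf hL le_rfl, ← count_true_take_bpSeq] at hroot
  set x := fun i => (bpt T).idxOf (false, i)
  set C := fun k => ((bpSeq T).take k).count true
  have hx : Monotone x := monotone_idxOf hL
  have hC : Monotone (C ∘ x) := fun i j h => (List.take_sublist_take_left (hx h)).count_le _
  have hgap : ∀ i ∈ Finset.range n, bpGap T i ≤ C (x (i + 1)) - C (x i) := fun i hi => by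
    have := idxOf_lt_idxOf hL (Nat.lt_add_one i) (Finset.mem_range.1 hi)
    rw [bpGap_eq_count, count_drop_take _ _ this]
    exact Nat.sub_le_sub_left ((List.take_sublist_take_left (Nat.le_succ _)).count_le _) _
  calc ∑ i ∈ Finset.Icc 1 (n - 1), bpGap T i
      ≤ ∑ i ∈ Finset.range n, bpGap T i :=
        Finset.sum_le_sum_of_subset fun i hi => by
          simp only [Finset.mem_Icc, Finset.mem_range] at hi ⊢
          omega
    _ ≤ ∑ i ∈ Finset.range n, (C (x (i + 1)) - C (x i)) := Finset.sum_le_sum hgap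
    _ = C (x n) - C (x 0) := Finset.sum_range_tsub hC n
    _ ≤ n - 1 := by
      have : C (x n) < n := hroot
      omega

end Gaps

lemma infix_bpt_buildTree {P : ℕ → ℕ} {n l : ℕ} (hl : childList P n l = []) (fuel i : ℕ)
    (h : (false, l) ∈ bpt (buildTree P n fuel i)) :
    [(false, l), (true, l)] <:+: bpt (buildTree P n fuel i) := by
  induction fuel generalizing i with
  | zero =>
    obtain rfl : l = i := by simpa [buildTree] using h
    simp [buildTree]
  | succ fuel ih =>
    rw [buildTree, bpt_node] at h ⊢
    simp only [List.cons_append, List.mem_cons, Prod.mk.injEq, true_and, List.mem_append,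
      Bool.false_eq_true, false_and, List.not_mem_nil, or_self, or_false] at h
    rcases h with rfl | h
    · simp [hl]
    · rw [bptL_eq_flatten, List.map_map] at h ⊢
      obtain ⟨_, hmem, hlc⟩ := List.mem_flatten.1 h
      obtain ⟨c, -, rfl⟩ := List.mem_map.1 hmem
      exact (ih c hlc).trans <|
        (List.infix_of_mem_flatten hmem).trans ⟨[(false, i)], [(true, i)], rfl⟩

lemma childList_eq_nil {P : ℕ → ℕ} {n i : ℕ} (h : ∀ j, 1 ≤ j → j ≤ n → P j ≠ i) :
    childList P n i = [] := by
  refine List.filter_eq_nil_iff.2 fun j hj hdec => ?_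
  simp only [decide_eq_true_eq] at hdec
  exact h j hdec.1 (Nat.lt_succ_iff.1 (List.mem_range.1 hj)) hdec.2.1

structure NonCrossing (P : ℕ → ℕ) (n : ℕ) : Prop where
  parent_lt : ∀ j, 1 ≤ j → j ≤ n → P j < j
  parent_le_parent : ∀ j m, 1 ≤ j → j ≤ n → P j < m → m < j → P j ≤ P m

lemma exists_subtreeEnd (P : ℕ → ℕ) (n i : ℕ) : ∃ e, i < e ∧ (n < e ∨ P e < i) :=
  ⟨max (n + 1) (i + 1), by omega, by omega⟩

/-- For a non-crossing parent function, the subtree rooted at `i` is `[i, subtreeEnd P n i)`. -/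
def subtreeEnd (P : ℕ → ℕ) (n i : ℕ) : ℕ := Nat.find (exists_subtreeEnd P n i)

section SubtreeEnd

variable {P : ℕ → ℕ} {n : ℕ}

lemma lt_subtreeEnd (i : ℕ) : i < subtreeEnd P n i :=
  (Nat.find_spec (exists_subtreeEnd P n i)).1

lemma subtreeEnd_spec (i : ℕ) : n < subtreeEnd P n i ∨ P (subtreeEnd P n i) < i :=
  (Nat.find_spec (exists_subtreeEnd P n i)).2

lemma subtreeEnd_le {i m : ℕ} (h : i < m) (hm : n < m ∨ P m < i) : subtreeEnd P n i ≤ m :=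
  Nat.find_le ⟨h, hm⟩

lemma le_parent_of_lt_subtreeEnd {i m : ℕ} (him : i < m) (hm : m < subtreeEnd P n i) :
    m ≤ n ∧ i ≤ P m := by
  have := Nat.find_min (exists_subtreeEnd P n i) hm
  omega

lemma subtreeEnd_zero : subtreeEnd P n 0 = n + 1 := by
  have := subtreeEnd_le (P := P) (n := n) (i := 0) (m := n + 1) (by omega) (by omega)
  have := subtreeEnd_spec (P := P) (n := n) 0
  omega

lemma subtreeEnd_le_subtreeEnd {i a : ℕ} (hia : i < a) (ha : a < subtreeEnd P n i) :
    subtreeEnd P n a ≤ subtreeEnd P n i :=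
  subtreeEnd_le ha ((subtreeEnd_spec i).imp_right (·.trans hia))

lemma filter_Ico_subtreeEnd {i a : ℕ} (hia : i < a) (ha : a < subtreeEnd P n i) (hPa : P a = i) :
    (List.Ico a (subtreeEnd P n i)).filter (fun j => decide (P j = i)) =
      a :: (List.Ico (subtreeEnd P n a) (subtreeEnd P n i)).filter (fun j => decide (P j = i)) := by
  have hEa := lt_subtreeEnd (P := P) (n := n) a
  have hdesc : (List.Ico (a + 1) (subtreeEnd P n a)).filter (fun j => decide (P j = i)) = [] := by
    refine List.filter_eq_nil_iff.2 fun j hj => ?_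
    have := le_parent_of_lt_subtreeEnd (List.Ico.mem.1 hj).1 (List.Ico.mem.1 hj).2
    simp only [decide_eq_true_eq]
    omega
  rw [List.Ico.eq_cons ha, List.filter_cons_of_pos (by simpa using hPa),
    ← List.Ico.append_consecutive hEa (subtreeEnd_le_subtreeEnd hia ha), List.filter_append,
    hdesc, List.nil_append]

variable (hP : NonCrossing P n)
include hP

lemma lt_subtreeEnd_of_parent_eq {i j : ℕ} (hj : j ≤ n) (hPj : P j = i) :
    j < subtreeEnd P n i := by
  by_contra! hle
  have hE := subtreeEnd_spec (P := P) (n := n) i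
  rcases hle.eq_or_lt with heq | hlt
  · rw [heq] at hE
    omega
  · have := hP.parent_le_parent j _ (by omega) hj (hPj ▸ lt_subtreeEnd i) hlt
    omega

lemma childList_eq_filter_Ico {i : ℕ} (hi : i ≤ n) :
    childList P n i = (List.Ico (i + 1) (subtreeEnd P n i)).filter (fun j => decide (P j = i)) := by
  have hE : subtreeEnd P n i ≤ n + 1 := subtreeEnd_le (by omega) (by omega)
  have hIco : (List.range (n + 1)).filter
      (fun j => decide (i + 1 ≤ j) && decide (j < subtreeEnd P n i)) =
        List.Ico (i + 1) (subtreeEnd P n i) := by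
    rw [← List.filter_filter, ← List.Ico.zero_bot, List.Ico.filter_lt, List.Ico.filter_le]
    congr 1; omega
  rw [childList, ← hIco, List.filter_filter]
  refine List.filter_congr fun j hj => ?_
  have := List.mem_range.1 hj
  have := lt_subtreeEnd_of_parent_eq hP (i := i) (j := j)
  rw [Bool.eq_iff_iff]
  simp only [Bool.and_eq_true, decide_eq_true_eq]
  constructor
  · rintro ⟨-, hPj, hij⟩
    exact ⟨hPj, by omega, this (by omega) hPj⟩
  · rintro ⟨hPj, hij, -⟩
    exact ⟨by omega, hPj, by omega⟩

lemma parent_subtreeEnd {i a : ℕ} (hia : i < a) (hlt : subtreeEnd P n a < subtreeEnd P n i)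
    (hPa : P a = i) : P (subtreeEnd P n a) = i := by
  have hEa := lt_subtreeEnd (P := P) (n := n) a
  have hmid := le_parent_of_lt_subtreeEnd (hia.trans hEa) hlt
  have := hP.parent_le_parent _ a (by omega) hmid.1
  have := subtreeEnd_spec (P := P) (n := n) a
  omega

lemma parent_succ_of_lt_subtreeEnd {i : ℕ} (h : i + 1 < subtreeEnd P n i) : P (i + 1) = i := by
  have := le_parent_of_lt_subtreeEnd (Nat.lt_add_one i) h
  have := hP.parent_lt (i + 1) (by omega) this.1
  omega

-- The children of `i` from `a` on are `a`, `subtreeEnd P n a`, …, and their subtrees tile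
-- `[a, subtreeEnd P n i)`.
lemma openLabels_bptL_siblings {i : ℕ} (f : ℕ → LTree)
    (hf : ∀ c, i < c → c < subtreeEnd P n i → P c = i →
      openLabels (bpt (f c)) = List.Ico c (subtreeEnd P n c))
    (a : ℕ) (hia : i < a) (ha : a ≤ subtreeEnd P n i) (hPa : a = subtreeEnd P n i ∨ P a = i) :
    openLabels (bptL (((List.Ico a (subtreeEnd P n i)).filter (fun j => decide (P j = i))).map f)) =
      List.Ico a (subtreeEnd P n i) := by
  rcases ha.eq_or_lt with rfl | ha
  · simp
  have hPa : P a = i := hPa.resolve_left ha.ne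
  have hEa := subtreeEnd_le_subtreeEnd hia ha
  have hnext : subtreeEnd P n a = subtreeEnd P n i ∨ P (subtreeEnd P n a) = i :=
    hEa.eq_or_lt.imp id fun hlt => parent_subtreeEnd hP hia hlt hPa
  rw [filter_Ico_subtreeEnd hia ha hPa, List.map_cons, bptL_cons, openLabels_append,
    hf a hia ha hPa, openLabels_bptL_siblings f hf _ (hia.trans (lt_subtreeEnd a)) hEa hnext,
    List.Ico.append_consecutive (lt_subtreeEnd a).le hEa]
termination_by subtreeEnd P n i - a
decreasing_by have := lt_subtreeEnd (P := P) (n := n) a; omega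

lemma openLabels_bpt_buildTree (fuel i : ℕ) (hi : i ≤ n) (hfuel : n + 1 ≤ fuel + i) :
    openLabels (bpt (buildTree P n fuel i)) = List.Ico i (subtreeEnd P n i) := by
  induction fuel generalizing i with
  | zero => omega
  | succ fuel ih =>
    have hfirst : i + 1 = subtreeEnd P n i ∨ P (i + 1) = i :=
      (Nat.succ_le_of_lt (lt_subtreeEnd i)).eq_or_lt.imp id (parent_succ_of_lt_subtreeEnd hP)
    have hchildren := openLabels_bptL_siblings hP (buildTree P n fuel)
      (fun c hic hc _ => ih c (le_parent_of_lt_subtreeEnd hic hc).1 (by omega))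
      (i + 1) (Nat.lt_add_one i) (lt_subtreeEnd i) hfirst
    rw [buildTree, bpt_node, childList_eq_filter_Ico hP hi, List.cons_append, openLabels_cons_false,
      openLabels_append, hchildren, List.Ico.eq_cons (lt_subtreeEnd i)]
    simp

lemma openLabels_bpt_root : openLabels (bpt (buildTree P n (n + 1) 0)) = List.range (n + 1) := by
  rw [openLabels_bpt_buildTree hP _ _ (Nat.zero_le n) le_rfl, subtreeEnd_zero, List.Ico.zero_bot]

lemma one_le_bpGap_root {i : ℕ} (hi : i + 1 ≤ n) (hleaf : ∀ j, 1 ≤ j → j ≤ n → P j ≠ i) :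
    1 ≤ bpGap (buildTree P n (n + 1) 0) i :=
  have hL := openLabels_bpt_root hP
  one_le_bpGap hL hi <| infix_bpt_buildTree (childList_eq_nil hleaf) _ _ <|
    mem_of_openLabels_eq_range hL (by omega)

end SubtreeEnd

lemma plv_eq_psv_neg (A : ℕ → ℤ) : plv A = psv (-A) := by
  funext i
  simp only [plv, psv, Pi.neg_apply, neg_lt_neg_iff]

lemma psv_nonCrossing (A : ℕ → ℤ) (n : ℕ) : NonCrossing (psv A) n where
  parent_lt j hj _ := (Nat.findGreatest_le (j - 1)).trans_lt (by omega)
  parent_le_parent j m hj _ hjm hmj := by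
    rcases Nat.eq_zero_or_pos (psv A j) with h0 | h0
    · omega
    have hlt : A (psv A j) < A j := Nat.findGreatest_of_ne_zero rfl h0.ne'
    have hle : A j ≤ A m :=
      not_lt.1 <| Nat.findGreatest_is_greatest (P := fun k => A k < A j) hjm (by omega)
    exact Nat.le_findGreatest (by omega) (hlt.trans_le hle)

lemma plv_nonCrossing (A : ℕ → ℤ) (n : ℕ) : NonCrossing (plv A) n :=
  plv_eq_psv_neg A ▸ psv_nonCrossing (-A) n

lemma lt_succ_of_psv_eq {A : ℕ → ℤ} {i j : ℕ} (hi : 1 ≤ i) (hj : psv A j = i) :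
    A i < A (i + 1) := by
  have hlt : A i < A j := hj ▸ Nat.findGreatest_of_ne_zero hj (by omega)
  have hij : i ≤ j - 1 := hj ▸ Nat.findGreatest_le (j - 1)
  rcases (show i + 1 ≤ j by omega).eq_or_lt with rfl | hj'
  · exact hlt
  · exact hlt.trans_le <| not_lt.1 <|
      Nat.findGreatest_is_greatest (P := fun k => A k < A j) (n := j - 1)
        (show psv A j < i + 1 by omega) (by omega)

lemma not_internalMax_of_internalMin {A : ℕ → ℤ} {n i : ℕ} (hi : 1 ≤ i)
    (h : internalMin A n i) : ¬ internalMax A n i := by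
  obtain ⟨j, -, -, hj⟩ := h
  rintro ⟨k, -, -, hk⟩
  have hup := lt_succ_of_psv_eq hi hj
  have hdown := lt_succ_of_psv_eq (A := -A) hi (plv_eq_psv_neg A ▸ hk)
  simp only [Pi.neg_apply, neg_lt_neg_iff] at hdown
  exact hup.asymm hdown

lemma one_le_kval {A : ℕ → ℤ} {n i : ℕ} (hi : 1 ≤ i) (hin : i + 1 ≤ n) : 1 ≤ kval A n i := by
  unfold kval
  split_ifs with h
  · have hleaf := not_internalMax_of_internalMin hi h
    simp only [internalMax, not_exists, not_and] at hleaf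
    exact one_le_bpGap_root (plv_nonCrossing A n) hin hleaf
  · simp only [internalMin, not_exists, not_and] at h
    exact one_le_bpGap_root (psv_nonCrossing A n) hin h

lemma sum_kval_le (A : ℕ → ℤ) (n : ℕ) :
    ∑ i ∈ Finset.Icc 1 (n - 1), kval A n i ≤ 2 * (n - 1) := by
  have hmin := sum_bpGap_le (openLabels_bpt_root (psv_nonCrossing A n))
  have hmax := sum_bpGap_le (openLabels_bpt_root (plv_nonCrossing A n))
  calc ∑ i ∈ Finset.Icc 1 (n - 1), kval A n i
      ≤ ∑ i ∈ Finset.Icc 1 (n - 1), (bpGap (minTree A n) i + bpGap (maxTree A n) i) :=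
        Finset.sum_le_sum fun i _ => by unfold kval bpGap; split_ifs <;> omega
    _ ≤ (n - 1) + (n - 1) := Finset.sum_add_distrib.trans_le (add_le_add hmin hmax)
    _ = 2 * (n - 1) := by ring

theorem stmt7 (A : ℕ → ℤ) (n : ℕ) (h : NoConsecEq A n) (hn : 1 ≤ n) :
    (∀ i, 1 ≤ i → i ≤ n - 1 → 1 ≤ kval A n i) ∧
    (∑ i ∈ Finset.Icc 1 (n - 1), kval A n i) ≤ 2 * (n - 1) ∧
    (∑ i ∈ Finset.Icc 1 (n - 1), (kval A n i - 1)) ≤ n - 1 := by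
  have hpos : ∀ i, 1 ≤ i → i ≤ n - 1 → 1 ≤ kval A n i := fun i hi hin => one_le_kval hi (by omega)
  have hsum := sum_kval_le A n
  refine ⟨hpos, hsum, ?_⟩
  rw [Finset.sum_tsub_distrib _ fun i hi => hpos i (Finset.mem_Icc.1 hi).1 (Finset.mem_Icc.1 hi).2]
  simp only [Finset.sum_const, Nat.card_Icc, smul_eq_mul, mul_one]
  omega
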